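/- General coordinate system theorem: let N be a finite set and σ an antichain of subsets of N with sp(σ) = N. For each family (κ_S)_{S∈σ} with κ_S an antichain of span S (i.e., sp(κ_S) = S), form the interval [⋁_{S∈σ} κ_S, ⨉_{S∈σ} κ_S]. The nonempty intervals among these are pairwise disjoint and their union is the set Υ_N of all antichains of subsets of N with span exactly N. -/

import Mathlib

open Finset

/-- Families of finite subsets of ℕ. -/
abbrev Fam := Finset (Finset ℕ)

/-- `α` is an antichain of subsets of `N`: all members are subsets of `N`
and no member is a (proper) subset of another. -/
def IsAC (N : Finset ℕ) (α : Fam) : Prop :=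
  (∀ A ∈ α, A ⊆ N) ∧ ∀ A ∈ α, ∀ B ∈ α, A ⊆ B → A = B

instance (N : Finset ℕ) : DecidablePred (IsAC N) := fun α => by
  unfold IsAC; infer_instance

/-- The partial order on antichains: every member of `α` is contained in some member of `β`. -/
def amle (α β : Fam) : Prop := ∀ A ∈ α, ∃ B ∈ β, A ⊆ B

instance (α β : Fam) : Decidable (amle α β) := by
  unfold amle; infer_instance

/-- `sup` of a family: its maximal elements under inclusion. -/
def maxels (S : Fam) : Fam := S.filter (fun A => ∀ B ∈ S, A ⊆ B → A = B)

/-- The span of an antichain: the union of its members. -/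
def sp (α : Fam) : Finset ℕ := α.sup id

/-- Join: maximal elements of the union. -/
def joinAC (α β : Fam) : Fam := maxels (α ∪ β)

/-- Meet: maximal elements of the pairwise intersections. -/
def meetAC (α β : Fam) : Fam := maxels ((α ×ˢ β).image fun p => p.1 ∩ p.2)

/-- Projection onto `M`: maximal elements of {A ∩ M : A ∈ α}. -/
def proj (M : Finset ℕ) (α : Fam) : Fam := maxels (α.image (· ∩ M))

/-- External product. -/
def xprod (α β : Fam) : Fam :=
  maxels ((α ×ˢ β).image fun p => (p.1 \ sp β) ∪ (p.2 \ sp α) ∪ (p.1 ∩ p.2))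

/-- The finite set of all antichains of subsets of `N`. -/
def AMTf (N : Finset ℕ) : Finset Fam := N.powerset.powerset.filter (IsAC N)

/-- The interval `[a, b]` inside `AMTf N`, as a `Finset`. -/
def intervalF (N : Finset ℕ) (a b : Fam) : Finset Fam :=
  (AMTf N).filter (fun κ => amle a κ ∧ amle κ b)

/-- The interval `[a, b]` of antichains of subsets of `N`, as a `Set`. -/
def intervalSet (N : Finset ℕ) (a b : Fam) : Set Fam :=
  {κ | IsAC N κ ∧ amle a κ ∧ amle κ b}

/-- n-ary join of a family indexed by the members of `σ`. -/
def bigJoin (σ : Fam) (κ : Finset ℕ → Fam) : Fam := maxels (σ.sup κ)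

/-- n-ary external product of a family indexed by the members of `σ`. -/
noncomputable def bigX (σ : Fam) (κ : Finset ℕ → Fam) : Fam :=
  (σ.toList.map κ).foldr xprod {(∅ : Finset ℕ)}

/-- Nonempty antichains of subsets of `S` with span exactly `S`. -/
def Upsf (S : Finset ℕ) : Finset Fam :=
  S.powerset.powerset.filter (fun κ => IsAC S κ ∧ κ ≠ ∅ ∧ sp κ = S)

/-!
If `γ` lies in `[⋁ κ_S, ⨉ κ_S]`, then its projection onto each coordinate `S`
is `κ_S`: the lower bound gives `κ_S ≤ proj_S γ`, and every member of `⨉ κ_S` meets `S` inside a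
member of `κ_S`, which gives `proj_S γ ≤ κ_S`. So the coordinates are determined by `γ`, making
the nonempty intervals pairwise disjoint. Conversely every `γ` of span `N` lies in the interval
of its own projections, since a set whose traces on all `S ∈ σ` are bounded by members of the
`κ_S` is contained in a member of `⨉ κ_S`.
-/

lemma mem_sp {α : Fam} {x : ℕ} : x ∈ sp α ↔ ∃ A ∈ α, x ∈ A := by
  simp [sp, Finset.mem_sup]

lemma subset_sp_of_mem {α : Fam} {A : Finset ℕ} (h : A ∈ α) : A ⊆ sp α :=
  le_sup (f := id) h

lemma mem_maxels {S : Fam} {A : Finset ℕ} :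
    A ∈ maxels S ↔ A ∈ S ∧ ∀ B ∈ S, A ⊆ B → A = B := by
  simp [maxels]

lemma maxels_subset (S : Fam) : maxels S ⊆ S := filter_subset _ _

lemma exists_mem_maxels_superset {S : Fam} {A : Finset ℕ} (h : A ∈ S) :
    ∃ B ∈ maxels S, A ⊆ B := by
  obtain ⟨m, hm, hmax⟩ := (S.filter (A ⊆ ·)).exists_maximal ⟨A, by simp [h]⟩
  rw [mem_filter] at hm
  refine ⟨m, mem_maxels.2 ⟨hm.1, fun B hB hmB => ?_⟩, hm.2⟩
  exact le_antisymm hmB (hmax (mem_filter.2 ⟨hB, hm.2.trans hmB⟩) hmB)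

lemma sp_maxels (S : Fam) : sp (maxels S) = sp S := by
  refine Subset.antisymm (sup_mono (maxels_subset S)) fun x hx => ?_
  obtain ⟨A, hA, hxA⟩ := mem_sp.1 hx
  obtain ⟨B, hB, hAB⟩ := exists_mem_maxels_superset hA
  exact mem_sp.2 ⟨B, hB, hAB hxA⟩

section Order

variable {α β γ : Fam}

lemma amle_trans (h₁ : amle α β) (h₂ : amle β γ) : amle α γ := fun A hA =>
  let ⟨B, hB, hAB⟩ := h₁ A hA
  let ⟨C, hC, hBC⟩ := h₂ B hB
  ⟨C, hC, hAB.trans hBC⟩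

lemma sp_subset_sp_of_amle (h : amle α β) : sp α ⊆ sp β := fun x hx => by
  obtain ⟨A, hA, hxA⟩ := mem_sp.1 hx
  obtain ⟨B, hB, hAB⟩ := h A hA
  exact mem_sp.2 ⟨B, hB, hAB hxA⟩

lemma subset_of_amle_of_amle (hα : ∀ A ∈ α, ∀ B ∈ α, A ⊆ B → A = B)
    (h₁ : amle α β) (h₂ : amle β α) : α ⊆ β := fun A hA => by
  obtain ⟨B, hB, hAB⟩ := h₁ A hA
  obtain ⟨A', hA', hBA'⟩ := h₂ B hB
  obtain rfl := hα A hA A' hA' (hAB.trans hBA')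
  rwa [Subset.antisymm hAB hBA']

lemma eq_of_amle_of_amle (hα : ∀ A ∈ α, ∀ B ∈ α, A ⊆ B → A = B)
    (hβ : ∀ A ∈ β, ∀ B ∈ β, A ⊆ B → A = B) (h₁ : amle α β) (h₂ : amle β α) : α = β :=
  Subset.antisymm (subset_of_amle_of_amle hα h₁ h₂) (subset_of_amle_of_amle hβ h₂ h₁)

end Order

section ExternalProduct

variable {α β : Fam}

lemma exists_of_mem_xprod {X : Finset ℕ} (h : X ∈ xprod α β) :
    ∃ a ∈ α, ∃ b ∈ β, (a \ sp β) ∪ (b \ sp α) ∪ (a ∩ b) = X := by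
  obtain ⟨⟨a, b⟩, hab, hX⟩ := mem_image.1 (maxels_subset _ h)
  exact ⟨a, (mem_product.1 hab).1, b, (mem_product.1 hab).2, hX⟩

lemma exists_inter_sp_subset_of_mem_xprod {X : Finset ℕ} (h : X ∈ xprod α β) :
    (∃ a ∈ α, X ∩ sp α ⊆ a) ∧ ∃ b ∈ β, X ∩ sp β ⊆ b := by
  obtain ⟨a, ha, b, hb, rfl⟩ := exists_of_mem_xprod h
  refine ⟨⟨a, ha, fun x hx => ?_⟩, ⟨b, hb, fun x hx => ?_⟩⟩ <;>
    simp only [mem_inter, mem_union, mem_sdiff] at hx <;> tauto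

lemma subset_sp_union_of_mem_xprod {X : Finset ℕ} (h : X ∈ xprod α β) :
    X ⊆ sp α ∪ sp β := by
  obtain ⟨a, ha, b, hb, rfl⟩ := exists_of_mem_xprod h
  have hxa := subset_sp_of_mem ha
  have hxb := subset_sp_of_mem hb
  intro x hx
  simp only [mem_inter, mem_union, mem_sdiff] at hx ⊢
  rcases hx with (hx | hx) | hx
  exacts [.inl (hxa hx.1), .inr (hxb hx.1), .inl (hxa hx.1)]

lemma exists_superset_mem_xprod {A : Finset ℕ} (hA : A ⊆ sp α ∪ sp β)
    (hα : ∃ a ∈ α, A ∩ sp α ⊆ a) (hβ : ∃ b ∈ β, A ∩ sp β ⊆ b) : ∃ X ∈ xprod α β, A ⊆ X := by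
  obtain ⟨a, ha, hAa⟩ := hα
  obtain ⟨b, hb, hAb⟩ := hβ
  obtain ⟨X, hX, hsub⟩ := exists_mem_maxels_superset
    (mem_image.2 ⟨(a, b), mem_product.2 ⟨ha, hb⟩, rfl⟩)
  refine ⟨X, hX, fun x hx => hsub ?_⟩
  have hxa : x ∈ sp α → x ∈ a := fun h => hAa (mem_inter.2 ⟨hx, h⟩)
  have hxb : x ∈ sp β → x ∈ b := fun h => hAb (mem_inter.2 ⟨hx, h⟩)
  have := hA hx
  simp only [mem_union, mem_sdiff, mem_inter] at this ⊢
  tauto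

lemma exists_singleton_inter_sp_subset (hα : α.Nonempty) (x : ℕ) : ∃ a ∈ α, {x} ∩ sp α ⊆ a := by
  by_cases hx : x ∈ sp α
  · obtain ⟨a, ha, hxa⟩ := mem_sp.1 hx
    exact ⟨a, ha, inter_subset_left.trans (singleton_subset_iff.2 hxa)⟩
  · obtain ⟨a, ha⟩ := hα
    exact ⟨a, ha, by simp [singleton_inter_of_notMem hx]⟩

lemma sp_xprod (hα : α.Nonempty) (hβ : β.Nonempty) : sp (xprod α β) = sp α ∪ sp β := by
  refine Subset.antisymm (fun x hx => ?_) (fun x hx => ?_)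
  · obtain ⟨X, hX, hxX⟩ := mem_sp.1 hx
    exact subset_sp_union_of_mem_xprod hX hxX
  · obtain ⟨X, hX, hxX⟩ := exists_superset_mem_xprod (singleton_subset_iff.2 hx)
      (exists_singleton_inter_sp_subset hα x) (exists_singleton_inter_sp_subset hβ x)
    exact mem_sp.2 ⟨X, hX, hxX (mem_singleton_self x)⟩

lemma nonempty_of_xprod_nonempty (h : (xprod α β).Nonempty) : α.Nonempty ∧ β.Nonempty := by
  obtain ⟨X, hX⟩ := h
  obtain ⟨a, ha, b, hb, -⟩ := exists_of_mem_xprod hX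
  exact ⟨⟨a, ha⟩, ⟨b, hb⟩⟩

end ExternalProduct

section ListProduct

def xprodList (L : List Fam) : Fam := L.foldr xprod {∅}

@[simp] lemma xprodList_nil : xprodList [] = {∅} := rfl

@[simp] lemma xprodList_cons (κ : Fam) (L : List Fam) :
    xprodList (κ :: L) = xprod κ (xprodList L) := rfl

lemma bigX_eq_xprodList (σ : Fam) (κ : Finset ℕ → Fam) :
    bigX σ κ = xprodList (σ.toList.map κ) := rfl

variable {L : List Fam}

lemma nonempty_of_xprodList_nonempty (h : (xprodList L).Nonempty) : ∀ κ ∈ L, κ.Nonempty := by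
  induction L with
  | nil => simp
  | cons μ L ih =>
    obtain ⟨hμ, hL⟩ := nonempty_of_xprod_nonempty h
    simpa [hμ] using ih hL

lemma xprodList_nonempty (h : ∀ κ ∈ L, κ.Nonempty) : (xprodList L).Nonempty := by
  induction L with
  | nil => simp
  | cons μ L ih =>
    obtain ⟨a, ha⟩ := h μ (by simp)
    obtain ⟨Y, hY⟩ := ih fun κ hκ => h κ (by simp [hκ])
    exact (exists_mem_maxels_superset
      (mem_image.2 ⟨(a, Y), mem_product.2 ⟨ha, hY⟩, rfl⟩)).imp fun X hX => hX.1

lemma sp_xprodList (h : ∀ κ ∈ L, κ.Nonempty) : sp (xprodList L) = L.toFinset.sup sp := by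
  induction L with
  | nil => rfl
  | cons μ L ih =>
    have hL : ∀ κ ∈ L, κ.Nonempty := fun κ hκ => h κ (by simp [hκ])
    rw [xprodList_cons, sp_xprod (h μ (by simp)) (xprodList_nonempty hL), ih hL,
      List.toFinset_cons, sup_insert]
    rfl

lemma exists_superset_mem_xprodList {A : Finset ℕ} (hA : A ⊆ L.toFinset.sup sp)
    (hc : ∀ κ ∈ L, ∃ C ∈ κ, A ∩ sp κ ⊆ C) : ∃ X ∈ xprodList L, A ⊆ X := by
  induction L generalizing A with
  | nil => exact ⟨∅, by simp, by simpa using hA⟩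
  | cons μ L ih =>
    have hspL : sp (xprodList L) = L.toFinset.sup sp :=
      sp_xprodList fun κ hκ => (hc κ (by simp [hκ])).imp fun C hC => hC.1
    rw [List.toFinset_cons, sup_insert] at hA
    rw [xprodList_cons]
    refine exists_superset_mem_xprod (by rwa [hspL]) (hc μ (by simp)) ?_
    rw [hspL]
    exact ih inter_subset_right fun κ hκ => (hc κ (by simp [hκ])).imp fun C hC =>
      ⟨hC.1, (inter_subset_inter_right inter_subset_left).trans hC.2⟩

lemma exists_inter_sp_subset_of_mem_xprodList {X : Finset ℕ} (hX : X ∈ xprodList L) :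
    ∀ κ ∈ L, ∃ C ∈ κ, X ∩ sp κ ⊆ C := by
  induction L generalizing X with
  | nil => simp
  | cons μ L ih =>
    rw [xprodList_cons] at hX
    obtain ⟨hμ, Y, hY, hXY⟩ := exists_inter_sp_subset_of_mem_xprod hX
    have hspL : sp (xprodList L) = L.toFinset.sup sp :=
      sp_xprodList (nonempty_of_xprodList_nonempty ⟨Y, hY⟩)
    rintro κ (_ | ⟨_, hκ⟩)
    · exact hμ
    · obtain ⟨C, hC, hYC⟩ := ih hY κ hκ
      have hκL : sp κ ⊆ sp (xprodList L) := hspL ▸ le_sup (List.mem_toFinset.2 hκ)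
      refine ⟨C, hC, fun x hx => hYC (mem_inter.2 ⟨hXY ?_, (mem_inter.1 hx).2⟩)⟩
      exact mem_inter.2 ⟨(mem_inter.1 hx).1, hκL (mem_inter.1 hx).2⟩

end ListProduct

section Coordinates

variable {σ γ : Fam} {κ : Finset ℕ → Fam}

lemma sup_sp_toList_map (h : ∀ S ∈ σ, sp (κ S) = S) :
    (σ.toList.map κ).toFinset.sup sp = sp σ := by
  have : (σ.toList.map κ).toFinset = σ.image κ := by ext; simp
  rw [this, sup_image]
  exact sup_congr rfl h

lemma exists_superset_mem_bigX {A : Finset ℕ} (hA : A ⊆ sp σ) (hκ : ∀ S ∈ σ, sp (κ S) = S)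
    (hc : ∀ S ∈ σ, ∃ C ∈ κ S, A ∩ S ⊆ C) : ∃ X ∈ bigX σ κ, A ⊆ X := by
  rw [bigX_eq_xprodList]
  refine exists_superset_mem_xprodList (by rwa [sup_sp_toList_map hκ]) ?_
  simp only [List.mem_map, mem_toList]
  rintro _ ⟨S, hS, rfl⟩
  rw [hκ S hS]
  exact hc S hS

lemma exists_inter_sp_subset_of_mem_bigX {X S : Finset ℕ} (hX : X ∈ bigX σ κ) (hS : S ∈ σ) :
    ∃ C ∈ κ S, X ∩ sp (κ S) ⊆ C :=
  exists_inter_sp_subset_of_mem_xprodList (bigX_eq_xprodList σ κ ▸ hX) _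
    (List.mem_map_of_mem (mem_toList.2 hS))

lemma amle_bigJoin {S : Finset ℕ} (hS : S ∈ σ) : amle (κ S) (bigJoin σ κ) := fun _ hC =>
  exists_mem_maxels_superset (mem_sup.2 ⟨S, hS, hC⟩)

lemma bigJoin_amle (h : ∀ S ∈ σ, amle (κ S) γ) : amle (bigJoin σ κ) γ := fun D hD => by
  obtain ⟨S, hS, hDS⟩ := mem_sup.1 (maxels_subset _ hD)
  exact h S hS D hDS

lemma sp_bigJoin (h : ∀ S ∈ σ, sp (κ S) = S) : sp (bigJoin σ κ) = sp σ := by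
  rw [bigJoin, sp_maxels, sp, sup_eq_biUnion σ κ, sup_biUnion]
  exact sup_congr rfl h

end Coordinates

section Projection

variable {M : Finset ℕ} {γ : Fam}

lemma exists_of_mem_proj {X : Finset ℕ} (h : X ∈ proj M γ) : ∃ A ∈ γ, A ∩ M = X := by
  simpa using maxels_subset _ h

lemma exists_superset_mem_proj {A : Finset ℕ} (hA : A ∈ γ) : ∃ C ∈ proj M γ, A ∩ M ⊆ C :=
  exists_mem_maxels_superset (mem_image.2 ⟨A, hA, rfl⟩)

lemma proj_isAC (M : Finset ℕ) (γ : Fam) : IsAC M (proj M γ) := by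
  refine ⟨fun X hX => ?_, fun A hA B hB => (mem_maxels.1 hA).2 B (maxels_subset _ hB)⟩
  obtain ⟨A, -, rfl⟩ := exists_of_mem_proj hX
  exact inter_subset_right

lemma sp_proj : sp (proj M γ) = sp γ ∩ M := by
  rw [proj, sp_maxels, sp, sup_image, sp]
  exact (sup_inf_distrib_right γ id M).symm

lemma sp_proj_of_subset_sp (h : M ⊆ sp γ) : sp (proj M γ) = M := by
  rw [sp_proj, inter_eq_right.2 h]

lemma amle_proj_of_amle {α : Fam} (h : amle α γ) (hα : ∀ C ∈ α, C ⊆ M) :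
    amle α (proj M γ) := fun C hC => by
  obtain ⟨A, hA, hCA⟩ := h C hC
  obtain ⟨E, hE, hAE⟩ := exists_superset_mem_proj (M := M) hA
  exact ⟨E, hE, (subset_inter hCA (hα C hC)).trans hAE⟩

lemma proj_amle : amle (proj M γ) γ := fun X hX => by
  obtain ⟨A, hA, rfl⟩ := exists_of_mem_proj hX
  exact ⟨A, hA, inter_subset_left⟩

end Projection

lemma eq_proj_of_amle_of_amle {σ γ : Fam} {κ : Finset ℕ → Fam} {S : Finset ℕ} (hS : S ∈ σ)
    (hκS : IsAC S (κ S) ∧ sp (κ S) = S) (hlo : amle (bigJoin σ κ) γ)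
    (hhi : amle γ (bigX σ κ)) : κ S = proj S γ := by
  refine eq_of_amle_of_amle hκS.1.2 (proj_isAC S γ).2
    (amle_proj_of_amle (amle_trans (amle_bigJoin hS) hlo) hκS.1.1) fun X hX => ?_
  obtain ⟨A, hA, rfl⟩ := exists_of_mem_proj hX
  obtain ⟨Y, hY, hAY⟩ := hhi A hA
  obtain ⟨C, hC, hYC⟩ := exists_inter_sp_subset_of_mem_bigX hY hS
  rw [hκS.2] at hYC
  exact ⟨C, hC, (inter_subset_inter_right hAY).trans hYC⟩

lemma mem_intervalSet_proj {N : Finset ℕ} {σ γ : Fam} (hsp : sp σ = N) (hγ : IsAC N γ)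
    (hspγ : sp γ = N) :
    γ ∈ intervalSet N (bigJoin σ fun S => proj S γ) (bigX σ fun S => proj S γ) := by
  refine ⟨hγ, bigJoin_amle fun S _ => proj_amle, fun A hA => ?_⟩
  exact exists_superset_mem_bigX (hsp ▸ hγ.1 A hA)
    (fun S hS => sp_proj_of_subset_sp (hspγ ▸ hsp ▸ subset_sp_of_mem hS))
    fun S _ => exists_superset_mem_proj hA

lemma sp_eq_of_mem_intervalSet {N : Finset ℕ} {σ γ : Fam} {κ : Finset ℕ → Fam}
    (hsp : sp σ = N) (hκ : ∀ S ∈ σ, sp (κ S) = S)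
    (hγ : γ ∈ intervalSet N (bigJoin σ κ) (bigX σ κ)) : sp γ = N := by
  refine Subset.antisymm (Finset.sup_le hγ.1.1) ?_
  rw [← hsp, ← sp_bigJoin hκ]
  exact sp_subset_sp_of_amle hγ.2.1

theorem general_coordinate_system_general (N : Finset ℕ) (σ : Fam)
    (hsp : sp σ = N) :
    (∀ κ₁ κ₂ : Finset ℕ → Fam,
      (∀ S ∈ σ, IsAC S (κ₁ S) ∧ sp (κ₁ S) = S) →
      (∀ S ∈ σ, IsAC S (κ₂ S) ∧ sp (κ₂ S) = S) →
      (∃ γ : Fam, γ ∈ intervalSet N (bigJoin σ κ₁) (bigX σ κ₁) ∧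
        γ ∈ intervalSet N (bigJoin σ κ₂) (bigX σ κ₂)) →
      ∀ S ∈ σ, κ₁ S = κ₂ S) ∧
    (∀ γ : Fam, (IsAC N γ ∧ sp γ = N) ↔
      ∃ κf : Finset ℕ → Fam, (∀ S ∈ σ, IsAC S (κf S) ∧ sp (κf S) = S) ∧
        γ ∈ intervalSet N (bigJoin σ κf) (bigX σ κf)) := by
  refine ⟨fun κ₁ κ₂ h₁ h₂ ⟨γ, hγ₁, hγ₂⟩ S hS => ?_, fun γ => ⟨?_, ?_⟩⟩
  · rw [eq_proj_of_amle_of_amle hS (h₁ S hS) hγ₁.2.1 hγ₁.2.2,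
      eq_proj_of_amle_of_amle hS (h₂ S hS) hγ₂.2.1 hγ₂.2.2]
  · rintro ⟨hγ, hspγ⟩
    exact ⟨fun S => proj S γ, fun S hS => ⟨proj_isAC S γ,
      sp_proj_of_subset_sp (hspγ ▸ hsp ▸ subset_sp_of_mem hS)⟩, mem_intervalSet_proj hsp hγ hspγ⟩
  · rintro ⟨κ, hκ, hγ⟩
    exact ⟨hγ.1, sp_eq_of_mem_intervalSet hsp (fun S hS => (hκ S hS).2) hγ⟩

/-- general coordinate system theorem. -/
theorem general_coordinate_system (N : Finset ℕ) (σ : Fam)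
    (hσ : IsAC N σ) (hsp : sp σ = N) :
    (∀ κ₁ κ₂ : Finset ℕ → Fam,
      (∀ S ∈ σ, IsAC S (κ₁ S) ∧ sp (κ₁ S) = S) →
      (∀ S ∈ σ, IsAC S (κ₂ S) ∧ sp (κ₂ S) = S) →
      (∃ γ : Fam, γ ∈ intervalSet N (bigJoin σ κ₁) (bigX σ κ₁) ∧
        γ ∈ intervalSet N (bigJoin σ κ₂) (bigX σ κ₂)) →
      ∀ S ∈ σ, κ₁ S = κ₂ S) ∧
    (∀ γ : Fam, (IsAC N γ ∧ sp γ = N) ↔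
      ∃ κf : Finset ℕ → Fam, (∀ S ∈ σ, IsAC S (κf S) ∧ sp (κf S) = S) ∧
        γ ∈ intervalSet N (bigJoin σ κf) (bigX σ κf)) :=
  general_coordinate_system_general N σ hsp
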